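/- arXiv:2211.10613 — 4 statements merged into one kernel-verified Lean document; each statement's English description precedes it below -/
import Mathlib

section
/- Let ζ : ℝ → ℝ be defined by ζ(x) = x² if x ≤ 0 and ζ(x) = 0 otherwise, extended to Hermitian matrices via the functional calculus. Then for any m×m Hermitian matrix H, Tr ζ(H) = min { ‖H − X‖₂² : X positive semidefinite }, where ‖·‖₂ is the Frobenius (Schatten 2) norm. -/
open Matrix ComplexOrder

/-- `ζ(x) = x²` for `x ≤ 0` and `0` otherwise. -/
noncomputable def zetaFn (x : ℝ) : ℝ := if x ≤ 0 then x ^ 2 else 0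

/-- `Tr ζ(H)` for a Hermitian matrix `H`, computed via the functional calculus:
`Tr ζ(H) = ∑ i, ζ(λ_i)` where `λ_i` are the eigenvalues of `H`. -/
noncomputable def traceZeta {m : ℕ} {H : Matrix (Fin m) (Fin m) ℂ}
    (hH : H.IsHermitian) : ℝ :=
  ∑ i, zetaFn (hH.eigenvalues i)

/-- Squared Frobenius (Schatten 2) norm `‖A‖₂² = Tr(A†A)`. -/
noncomputable def frobSq {m : ℕ} (A : Matrix (Fin m) (Fin m) ℂ) : ℝ :=
  (Matrix.trace (Aᴴ * A)).re

/-
Conjugation by the unitary `U` diagonalising `H = U D U*` preserves both positive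
semidefiniteness and the Frobenius norm, so `H` may be replaced by `D = diag λ`. For `Y ⪰ 0`
the diagonal entries `Y i i` are nonnegative reals, and `ζ(λ)` is the squared distance from `λ`
to `[0, ∞)`; hence `‖D - Y‖₂² ≥ ∑ i |λ i - Y i i|² ≥ ∑ i ζ(λ i)`, with equality at
`Y = diag (max λ 0)`.
-/

lemma zetaFn_eq_min_sq (x : ℝ) : zetaFn x = min x 0 ^ 2 := by
  rcases le_or_gt x 0 with h | h
  · simp [zetaFn, h]
  · simp [zetaFn, h.not_ge, h.le]

lemma zetaFn_le_normSq_sub (x : ℝ) {z : ℂ} (hz : 0 ≤ z) : zetaFn x ≤ Complex.normSq (x - z) := by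
  obtain ⟨hre, him⟩ := Complex.nonneg_iff.mp hz
  have hnormSq : Complex.normSq (x - z) = (x - z.re) ^ 2 := by
    simp [Complex.normSq_apply, ← him, sq]
  rw [hnormSq, zetaFn]
  split_ifs <;> nlinarith

section Frobenius

variable {m : ℕ}

lemma frobSq_eq_sum_normSq (A : Matrix (Fin m) (Fin m) ℂ) :
    frobSq A = ∑ i, ∑ j, Complex.normSq (A i j) := by
  rw [frobSq, Finset.sum_comm]
  simp only [trace, diag, mul_apply, conjTranspose_apply, Complex.re_sum]
  refine Finset.sum_congr rfl fun j _ => Finset.sum_congr rfl fun i _ => ?_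
  simp [Complex.normSq_apply, Complex.mul_re]

lemma sum_normSq_diag_le_frobSq (A : Matrix (Fin m) (Fin m) ℂ) :
    ∑ i, Complex.normSq (A i i) ≤ frobSq A := by
  rw [frobSq_eq_sum_normSq]
  exact Finset.sum_le_sum fun i _ =>
    Finset.single_le_sum (f := fun j => Complex.normSq (A i j))
      (fun j _ => Complex.normSq_nonneg _) (Finset.mem_univ i)

lemma frobSq_diagonal (d : Fin m → ℂ) : frobSq (diagonal d) = ∑ i, Complex.normSq (d i) := by
  rw [frobSq_eq_sum_normSq]
  refine Finset.sum_congr rfl fun i _ => ?_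
  rw [Finset.sum_eq_single i (fun j _ hij => by simp [diagonal_apply_ne _ hij.symm]) (by simp)]
  simp

lemma frobSq_unitary_conj {U : Matrix (Fin m) (Fin m) ℂ} (hU : U ∈ unitaryGroup (Fin m) ℂ)
    (A : Matrix (Fin m) (Fin m) ℂ) : frobSq (U * A * star U) = frobSq A := by
  have hUU : Uᴴ * U = 1 := hU.1
  have hconj : (U * A * star U)ᴴ * (U * A * star U) = U * (Aᴴ * A) * star U := by
    simp only [conjTranspose_mul, star_eq_conjTranspose, conjTranspose_conjTranspose, mul_assoc]
    rw [← mul_assoc Uᴴ U, hUU, one_mul]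
  rw [frobSq, frobSq, hconj, trace_mul_cycle, ← mul_assoc, star_eq_conjTranspose, hUU, one_mul]

lemma sum_zetaFn_le_frobSq_diagonal_sub (d : Fin m → ℝ) {Y : Matrix (Fin m) (Fin m) ℂ}
    (hY : Y.PosSemidef) : ∑ i, zetaFn (d i) ≤ frobSq (diagonal (Complex.ofReal ∘ d) - Y) :=
  calc ∑ i, zetaFn (d i)
      ≤ ∑ i, Complex.normSq ((diagonal (Complex.ofReal ∘ d) - Y) i i) :=
        Finset.sum_le_sum fun i _ => by simpa using zetaFn_le_normSq_sub (d i) hY.diag_nonneg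
    _ ≤ frobSq (diagonal (Complex.ofReal ∘ d) - Y) := sum_normSq_diag_le_frobSq _

lemma posSemidef_diagonal_max_zero (d : Fin m → ℝ) :
    (diagonal fun i => ((max (d i) 0 : ℝ) : ℂ)).PosSemidef :=
  posSemidef_diagonal_iff.mpr fun i => by simp [Complex.nonneg_iff]

lemma frobSq_diagonal_sub_diagonal_max_zero (d : Fin m → ℝ) :
    frobSq (diagonal (Complex.ofReal ∘ d) - diagonal fun i => ((max (d i) 0 : ℝ) : ℂ)) =
      ∑ i, zetaFn (d i) := by
  rw [diagonal_sub, frobSq_diagonal]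
  refine Finset.sum_congr rfl fun i _ => ?_
  have hmin : d i - max (d i) 0 = min (d i) 0 := by linarith [min_add_max (d i) 0]
  simp [← Complex.ofReal_sub, hmin, zetaFn_eq_min_sq, sq]

end Frobenius

/-- For any Hermitian matrix `H`,
`Tr ζ(H) = min { ‖H − X‖₂² : X positive semidefinite }`. -/
theorem traceZeta_eq_min_dist_psd {m : ℕ} {H : Matrix (Fin m) (Fin m) ℂ}
    (hH : H.IsHermitian) :
    IsLeast {c : ℝ | ∃ X : Matrix (Fin m) (Fin m) ℂ, X.PosSemidef ∧ c = frobSq (H - X)}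
      (traceZeta hH) := by
  set U : Matrix (Fin m) (Fin m) ℂ := (hH.eigenvectorUnitary : Matrix (Fin m) (Fin m) ℂ)
  have hU : U ∈ unitaryGroup (Fin m) ℂ := hH.eigenvectorUnitary.2
  set D : Matrix (Fin m) (Fin m) ℂ := diagonal (Complex.ofReal ∘ hH.eigenvalues)
  have hHD : ∀ Y, H - U * Y * star U = U * (D - Y) * star U := fun Y => by
    rw [mul_sub, sub_mul, ← show H = U * D * star U from hH.spectral_theorem]
  constructor
  · refine ⟨U * diagonal (fun i => ((max (hH.eigenvalues i) 0 : ℝ) : ℂ)) * star U,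
      (posSemidef_diagonal_max_zero _).mul_mul_conjTranspose_same U, ?_⟩
    rw [hHD, frobSq_unitary_conj hU, frobSq_diagonal_sub_diagonal_max_zero, traceZeta]
  · rintro _ ⟨X, hX, rfl⟩
    have hX_eq : U * (star U * X * U) * star U = X := by
      rw [← mul_assoc, ← mul_assoc, hU.2, one_mul, mul_assoc, hU.2, mul_one]
    rw [← hX_eq, hHD, frobSq_unitary_conj hU]
    exact sum_zetaFn_le_frobSq_diagonal_sub _ (hX.conjTranspose_mul_mul_same U)
end

section
/- If A and B are Hermitian matrices with A ≥ B ≥ 0 (in the Loewner order), then B A⁺ B ≤ B, where A⁺ denotes the Moore–Penrose pseudoinverse of A. -/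
/-!
With `P = A⁺`, which is Hermitian and satisfies `P A P = P`, the difference `B - B P B` splits as
`(1 - P B)ᴴ B (1 - P B) + (P B)ᴴ (A - B) (P B)`, a sum of congruences of the positive semidefinite
matrices `B` and `A - B`. Identifying `A⁺` with the continuous functional calculus `cfc (·⁻¹) A`
(recall `0⁻¹ = 0` in `ℝ`) gives both properties of `P` for free.
-/

open Matrix ComplexOrder

/-- The Moore–Penrose pseudoinverse of a Hermitian matrix, defined via its spectral
decomposition: invert the nonzero eigenvalues and leave the kernel alone. -/
noncomputable def hermitianPinv {n : ℕ} {A : Matrix (Fin n) (Fin n) ℂ}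
    (hA : A.IsHermitian) : Matrix (Fin n) (Fin n) ℂ :=
  (hA.eigenvectorUnitary : Matrix (Fin n) (Fin n) ℂ) *
    Matrix.diagonal (fun i => ((if hA.eigenvalues i = 0 then 0 else (hA.eigenvalues i)⁻¹ : ℝ) : ℂ)) *
    star (hA.eigenvectorUnitary : Matrix (Fin n) (Fin n) ℂ)

theorem sub_mul_mul_eq_star_mul_mul_add {R : Type*} [Ring R] [StarRing R] {A B P : R}
    (hB : star B = B) (hP : star P = P) (hPAP : P * A * P = P) :
    B - B * P * B = star (1 - P * B) * B * (1 - P * B) + star (P * B) * (A - B) * (P * B) := by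
  simp only [star_sub, star_one, star_mul, hB, hP]
  calc B - B * P * B = B - B * P * B + (B * (P * A * P) * B - B * P * B * P * B)
          - (B * P * B - B * P * B * P * B) := by rw [hPAP]; abel
    _ = _ := by noncomm_ring

namespace Matrix

theorem PosSemidef.sub_mul_mul_of_mul_mul_eq {m R : Type*} [Fintype m] [Ring R] [PartialOrder R]
    [StarRing R] [AddLeftMono R] {A B P : Matrix m m R} (hB : B.PosSemidef)
    (hAB : (A - B).PosSemidef) (hP : P.IsHermitian) (hPAP : P * A * P = P) :
    (B - B * P * B).PosSemidef := by
  classical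
  rw [sub_mul_mul_eq_star_mul_mul_add hB.isHermitian hP hPAP]
  exact (hB.conjTranspose_mul_mul_same _).add (hAB.conjTranspose_mul_mul_same _)

theorem IsHermitian.cfc_inv_mul_self_mul_cfc_inv {n 𝕜 : Type*} [Fintype n] [DecidableEq n]
    [RCLike 𝕜] {A : Matrix n n 𝕜} (hA : A.IsHermitian) :
    cfc (·⁻¹ : ℝ → ℝ) A * A * cfc (·⁻¹ : ℝ → ℝ) A = cfc (·⁻¹ : ℝ → ℝ) A := by
  have hcont (f : ℝ → ℝ) : ContinuousOn f (spectrum ℝ A) := A.finite_real_spectrum.continuousOn f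
  nth_rewrite 2 [← cfc_id' ℝ A]
  rw [← cfc_mul _ _ _ (hcont _) (hcont _), ← cfc_mul _ _ _ (hcont _) (hcont _)]
  congr 1
  ext x
  rcases eq_or_ne x 0 with rfl | hx
  · simp
  · field_simp

end Matrix

theorem hermitianPinv_eq_cfc {n : ℕ} {A : Matrix (Fin n) (Fin n) ℂ} (hA : A.IsHermitian) :
    hermitianPinv hA = cfc (·⁻¹ : ℝ → ℝ) A := by
  rw [hA.cfc_eq, IsHermitian.cfc, Unitary.conjStarAlgAut_apply, hermitianPinv]
  congr 3
  ext i
  split_ifs with h <;> simp [h]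

/-- If `A ≥ B ≥ 0` in the Loewner order, then `B A⁺ B ≤ B`, where `A⁺` is the
Moore–Penrose inverse of `A`. -/
theorem pinv_sandwich_le {n : ℕ} {A B : Matrix (Fin n) (Fin n) ℂ}
    (hA : A.IsHermitian) (hB : B.PosSemidef) (hAB : (A - B).PosSemidef) :
    (B - B * hermitianPinv hA * B).PosSemidef := by
  rw [hermitianPinv_eq_cfc]
  exact hB.sub_mul_mul_of_mul_mul_eq hAB (cfc_predicate _ A) hA.cfc_inv_mul_self_mul_cfc_inv
end

section
/- Let J be a positive semidefinite operator on the tensor product of Hilbert spaces S ⊗ A, where A has dimension a. Then a · (Tr_A J) ⊗ I_A ≥ J in the Loewner order, where Tr_A is the partial trace over A. -/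
open Matrix ComplexOrder

/-- Partial trace over the second tensor factor `A` of an operator on `S ⊗ A`. -/
noncomputable def ptraceA {s a : ℕ} (J : Matrix (Fin s × Fin a) (Fin s × Fin a) ℂ) :
    Matrix (Fin s) (Fin s) ℂ :=
  fun i j => ∑ k : Fin a, J (i, k) (j, k)

/-- Tensor product `M ⊗ I_A` of an operator on `S` with the identity on `A`. -/
noncomputable def tensorIdA {s a : ℕ} (M : Matrix (Fin s) (Fin s) ℂ) :
    Matrix (Fin s × Fin a) (Fin s × Fin a) ℂ :=
  fun p q => M p.1 q.1 * (if p.2 = q.2 then 1 else 0)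

/-!
Let `y k l = (I_S ⊗ |k⟩⟨l|) x`. Then `⟨x, (Tr_A J ⊗ I_A) x⟩ = ∑ k l, ⟨y k l, J (y k l)⟩`, while
`x = ∑ k, y k k`, so `⟨x, J x⟩ ≤ a ∑ k, ⟨y k k, J (y k k)⟩` by the Cauchy–Schwarz-type bound
`‖∑ k, z k‖² ≤ a ∑ k, ‖z k‖²` for the seminorm of `J` (expand `∑ k l, ‖z k - z l‖² ≥ 0`);
dropping the terms `k ≠ l` of the first sum only makes it smaller.
-/

namespace Matrix

variable {n ι : Type*} [Fintype n] [Fintype ι]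

lemma sum_sum_dotProduct_mulVec_sub {R : Type*} [CommRing R] [StarRing R] (J : Matrix n n R)
    (z : ι → n → R) :
    ∑ k, ∑ l, star (z k - z l) ⬝ᵥ (J *ᵥ (z k - z l)) =
      2 * (Fintype.card ι * ∑ k, star (z k) ⬝ᵥ (J *ᵥ z k)
        - star (∑ k, z k) ⬝ᵥ (J *ᵥ ∑ k, z k)) := by
  simp only [star_sub, mulVec_sub, sub_dotProduct, dotProduct_sub, star_sum, mulVec_sum,
    dotProduct_sum, sum_dotProduct, Finset.sum_sub_distrib, Finset.sum_const, Finset.card_univ,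
    nsmul_eq_mul, Finset.mul_sum]
  rw [Finset.sum_comm (f := fun k l => star (z l) ⬝ᵥ (J *ᵥ z k))]
  ring

lemma PosSemidef.dotProduct_mulVec_sum_le {J : Matrix n n ℂ} (hJ : J.PosSemidef)
    (z : ι → n → ℂ) :
    star (∑ k, z k) ⬝ᵥ (J *ᵥ ∑ k, z k) ≤ Fintype.card ι * ∑ k, star (z k) ⬝ᵥ (J *ᵥ z k) := by
  have h : (0 : ℂ) ≤ 2 * (Fintype.card ι * ∑ k, star (z k) ⬝ᵥ (J *ᵥ z k)
      - star (∑ k, z k) ⬝ᵥ (J *ᵥ ∑ k, z k)) := by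
    rw [← sum_sum_dotProduct_mulVec_sub]
    exact Finset.sum_nonneg fun k _ => Finset.sum_nonneg fun l _ => hJ.dotProduct_mulVec_nonneg _
  simpa using smul_nonneg (by norm_num : (0 : ℝ) ≤ 2⁻¹) h

end Matrix

section shiftA

variable {R σ α : Type*} [DecidableEq α]

/-- `shiftA x k l = (I_S ⊗ |k⟩⟨l|) x`. -/
def shiftA [Zero R] (x : σ × α → R) (k l : α) : σ × α → R :=
  fun p => if p.2 = k then x (p.1, l) else 0

lemma sum_shiftA_self [AddCommMonoid R] [Fintype α] (x : σ × α → R) :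
    ∑ k, shiftA x k k = x := by
  ext p
  simp [shiftA, Finset.sum_apply]

lemma dotProduct_shiftA_mulVec_shiftA [CommSemiring R] [StarRing R] [Fintype σ] [Fintype α]
    (J : Matrix (σ × α) (σ × α) R) (x : σ × α → R) (k l m n : α) :
    star (shiftA x k l) ⬝ᵥ (J *ᵥ shiftA x m n) =
      ∑ i, ∑ j, star (x (i, l)) * (J (i, k) (j, m) * x (j, n)) := by
  simp [shiftA, dotProduct, mulVec, Fintype.sum_prod_type, apply_ite star, Finset.mul_sum]

end shiftA

section ptraceA

variable {s a : ℕ}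

lemma Matrix.IsHermitian.ptraceA {J : Matrix (Fin s × Fin a) (Fin s × Fin a) ℂ}
    (hJ : J.IsHermitian) : (ptraceA J).IsHermitian := by
  ext i j
  simp only [conjTranspose_apply, _root_.ptraceA, star_sum]
  exact Finset.sum_congr rfl fun k _ => hJ.apply _ _

lemma Matrix.IsHermitian.tensorIdA {M : Matrix (Fin s) (Fin s) ℂ} (hM : M.IsHermitian) :
    (tensorIdA M : Matrix (Fin s × Fin a) (Fin s × Fin a) ℂ).IsHermitian := by
  ext p q
  simp [_root_.tensorIdA, hM.apply, apply_ite (star : ℂ → ℂ), eq_comm]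

lemma dotProduct_tensorIdA_ptraceA_mulVec (J : Matrix (Fin s × Fin a) (Fin s × Fin a) ℂ)
    (x : Fin s × Fin a → ℂ) :
    star x ⬝ᵥ (tensorIdA (ptraceA J) *ᵥ x) =
      ∑ k, ∑ l, star (shiftA x k l) ⬝ᵥ (J *ᵥ shiftA x k l) := by
  simp only [dotProduct_shiftA_mulVec_shiftA]
  simp only [dotProduct, Pi.star_apply, mulVec, tensorIdA, ptraceA, mul_ite, mul_one, mul_zero,
    ite_mul, zero_mul, Finset.sum_mul, Finset.mul_sum, Fintype.sum_prod_type, Finset.sum_ite_eq,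
    Finset.mem_univ, ↓reduceIte]
  rw [Finset.sum_comm]
  conv_rhs => rw [Finset.sum_comm]
  exact Finset.sum_congr rfl fun l _ => Finset.sum_comm_cycle

end ptraceA

/-- If `J ≥ 0` on `S ⊗ A` with `dim A = a`, then `a · (Tr_A J) ⊗ I_A ≥ J`. -/
theorem ptrace_tensor_id_ge {s a : ℕ} {J : Matrix (Fin s × Fin a) (Fin s × Fin a) ℂ}
    (hJ : J.PosSemidef) :
    ((a : ℂ) • tensorIdA (ptraceA J) - J).PosSemidef := by
  have hT : (tensorIdA (ptraceA J) : Matrix (Fin s × Fin a) _ ℂ).IsHermitian :=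
    hJ.isHermitian.ptraceA.tensorIdA
  refine PosSemidef.of_dotProduct_mulVec_nonneg
    ((hT.smul (IsSelfAdjoint.natCast a)).sub hJ.isHermitian) fun x => ?_
  rw [sub_mulVec, dotProduct_sub, smul_mulVec, dotProduct_smul, smul_eq_mul, sub_nonneg,
    dotProduct_tensorIdA_ptraceA_mulVec]
  calc star x ⬝ᵥ (J *ᵥ x)
      = star (∑ k, shiftA x k k) ⬝ᵥ (J *ᵥ ∑ k, shiftA x k k) := by rw [sum_shiftA_self]
    _ ≤ a * ∑ k, star (shiftA x k k) ⬝ᵥ (J *ᵥ shiftA x k k) := by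
      simpa using hJ.dotProduct_mulVec_sum_le fun k => shiftA x k k
    _ ≤ a * ∑ k, ∑ l, star (shiftA x k l) ⬝ᵥ (J *ᵥ shiftA x k l) :=
      mul_le_mul_of_nonneg_left (Finset.sum_le_sum fun k _ =>
        Finset.single_le_sum (fun l _ => hJ.dotProduct_mulVec_nonneg _) (Finset.mem_univ k))
        (Nat.cast_nonneg a)
end

section
/- For 0 ≤ ε < 1 and integer m > 1, the depolarized maximally entangled state (1−ε)|Ψ⟩⟨Ψ| + ε·(I_m/m) ⊗ (I_m/m), where |Ψ⟩ = (1/√m)∑ᵢ|ii⟩, has maximal correlation exactly 1 − ε. -/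
open Matrix

noncomputable def tensorOp {s t : ℕ} (P : Matrix (Fin s) (Fin s) ℂ)
    (Q : Matrix (Fin t) (Fin t) ℂ) : Matrix (Fin s × Fin t) (Fin s × Fin t) ℂ :=
  fun x y => P x.1 y.1 * Q x.2 y.2

/-- The projector `|Ψ⟩⟨Ψ|` onto the `m`-dimensional maximally entangled state
`|Ψ⟩ = (1/√m) ∑ᵢ |i⟩|i⟩`. -/
noncomputable def mesProj (m : ℕ) : Matrix (Fin m × Fin m) (Fin m × Fin m) ℂ :=
  fun p q => if p.1 = p.2 ∧ q.1 = q.2 then (m : ℂ)⁻¹ else 0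

/-- The depolarized maximally entangled state
`(1−ε)|Ψ⟩⟨Ψ| + ε·(I/m) ⊗ (I/m)`. -/
noncomputable def depolarizedMES (m : ℕ) (ε : ℝ) :
    Matrix (Fin m × Fin m) (Fin m × Fin m) ℂ :=
  ((1 - ε : ℝ) : ℂ) • mesProj m + ((ε : ℂ) / (m : ℂ) ^ 2) • (1 : Matrix (Fin m × Fin m) (Fin m × Fin m) ℂ)

/-!
On traceless `P` the white-noise part of the state contributes `ε/m² · Tr P · Tr Q = 0`, while the
entangled part gives `Tr((P ⊗ Q)|Ψ⟩⟨Ψ|) = Tr(P Qᵀ)/m`. For Hermitian `P`, `Q` this is a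
Hilbert–Schmidt inner product `Tr(Pᴴ Qᵀ)`, so Cauchy–Schwarz bounds it by `‖P‖₂‖Q‖₂ = m`, and
equality holds for `Q = P = Pᵀ`, e.g. the real diagonal matrix `√(m/2) · diag(1, -1, 0, …, 0)`.
-/

open scoped Kronecker

theorem tensorOp_eq_kronecker {s t : ℕ} (P : Matrix (Fin s) (Fin s) ℂ)
    (Q : Matrix (Fin t) (Fin t) ℂ) :
    tensorOp P Q = P ⊗ₖ Q := rfl

theorem trace_tensorOp_mul_mesProj {m : ℕ} (P Q : Matrix (Fin m) (Fin m) ℂ) :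
    (tensorOp P Q * mesProj m).trace = (m : ℂ)⁻¹ * (P * Qᵀ).trace := by
  simp only [trace, diag, mul_apply, tensorOp, mesProj, transpose_apply, Fintype.sum_prod_type,
    mul_ite, mul_zero, ite_and, Finset.sum_ite_eq, Finset.sum_ite_irrel, Finset.sum_const_zero,
    Finset.mem_univ, if_true, Finset.mul_sum]
  exact Finset.sum_congr rfl fun i _ => Finset.sum_congr rfl fun j _ => mul_comm _ _

theorem trace_tensorOp_mul_depolarizedMES {m : ℕ} (ε : ℝ) {P : Matrix (Fin m) (Fin m) ℂ}
    (hP : P.trace = 0) (Q : Matrix (Fin m) (Fin m) ℂ) :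
    (tensorOp P Q * depolarizedMES m ε).trace =
      ((1 - ε : ℝ) : ℂ) * ((m : ℂ)⁻¹ * (P * Qᵀ).trace) := by
  rw [depolarizedMES, Matrix.mul_add, Matrix.mul_smul, Matrix.mul_smul, mul_one, trace_add,
    trace_smul, trace_smul, trace_tensorOp_mul_mesProj, tensorOp_eq_kronecker, trace_kronecker, hP,
    zero_mul, smul_zero, add_zero, smul_eq_mul]

namespace Matrix

variable {𝕜 : Type*} [RCLike 𝕜] {m n : Type*} [Fintype m] [Fintype n]

open RCLike in
theorem norm_trace_conjTranspose_mul_le (A B : Matrix m n 𝕜) :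
    ‖(Aᴴ * B).trace‖ ≤ √(re (Aᴴ * A).trace) * √(re (Bᴴ * B).trace) := by
  have h (A B : Matrix m n 𝕜) :
      (Aᴴ * B).trace = inner 𝕜 (WithLp.toLp 2 (vec A)) (WithLp.toLp 2 (vec B)) := by
    rw [EuclideanSpace.inner_toLp_toLp, dotProduct_comm, star_vec_dotProduct_vec]
  simpa only [h, ← norm_eq_sqrt_re_inner] using norm_inner_le_norm (𝕜 := 𝕜) _ _

open RCLike in
theorem IsHermitian.norm_trace_mul_transpose_le {A B : Matrix n n 𝕜} (hA : A.IsHermitian)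
    (hB : B.IsHermitian) :
    ‖(A * Bᵀ).trace‖ ≤ √(re (A * A).trace) * √(re (B * B).trace) := by
  have := norm_trace_conjTranspose_mul_le A Bᵀ
  rwa [hA.eq, hB.transpose.eq, trace_transpose_mul] at this

end Matrix

theorem exists_isHermitian_transpose_eq_self_trace_eq_zero {n : Type*} [Fintype n]
    [DecidableEq n] [Nontrivial n] {r : ℝ} (hr : 0 ≤ r) :
    ∃ P : Matrix n n ℂ, P.IsHermitian ∧ Pᵀ = P ∧ P.trace = 0 ∧ (P * P).trace = r := by
  obtain ⟨i, j, hij⟩ := exists_pair_ne n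
  obtain ⟨t, ht⟩ : ∃ t : ℝ, t ^ 2 = r / 2 := ⟨√(r / 2), Real.sq_sqrt (by positivity)⟩
  set d : n → ℝ := Pi.single i t - Pi.single j t
  have hd : d * d = Pi.single i (t ^ 2) + Pi.single j (t ^ 2) := by
    funext k
    by_cases hi : k = i <;> by_cases hj : k = j <;> simp_all [d, sq]
  refine ⟨diagonal (fun k => (d k : ℂ)), isHermitian_diagonal_of_self_adjoint _ ?_,
    diagonal_transpose _, ?_, ?_⟩
  · ext k; simp
  · simp [trace_diagonal, d, ← Complex.ofReal_sum, Finset.sum_sub_distrib]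
  · have hsum : ∑ k, d k * d k = r := by
      simp only [← Pi.mul_apply d d, hd, Pi.add_apply, Finset.sum_add_distrib,
        Finset.sum_pi_single', Finset.mem_univ, if_true, ht]
      ring
    simp only [diagonal_mul_diagonal, trace_diagonal, ← Complex.ofReal_mul, ← Complex.ofReal_sum,
      hsum]

theorem norm_trace_tensorOp_mul_depolarizedMES_le {m : ℕ} {ε : ℝ} (hε : ε ≤ 1)
    {P Q : Matrix (Fin m) (Fin m) ℂ} (hP : P.IsHermitian) (hQ : Q.IsHermitian)
    (hTP : P.trace = 0) (hPP : (P * P).trace.re = m) (hQQ : (Q * Q).trace.re = m) :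
    ‖(tensorOp P Q * depolarizedMES m ε).trace‖ ≤ 1 - ε := by
  have hCS := hP.norm_trace_mul_transpose_le hQ
  rw [RCLike.re_to_complex, RCLike.re_to_complex, hPP, hQQ,
    Real.mul_self_sqrt m.cast_nonneg] at hCS
  rw [trace_tensorOp_mul_depolarizedMES ε hTP, norm_mul, norm_mul, Complex.norm_real,
    Real.norm_of_nonneg (sub_nonneg.2 hε), norm_inv, Complex.norm_natCast]
  calc (1 - ε) * ((m : ℝ)⁻¹ * ‖(P * Qᵀ).trace‖) ≤ (1 - ε) * ((m : ℝ)⁻¹ * m) := by gcongr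
    _ ≤ 1 - ε :=
      mul_le_of_le_one_right (sub_nonneg.2 hε) (inv_mul_le_one_of_le₀ le_rfl m.cast_nonneg)

theorem maximal_correlation_depolarized_mes_general (m : ℕ) (hm : 1 < m) (ε : ℝ)
    (hε1 : ε < 1) :
    IsLUB {x : ℝ | ∃ (P Q : Matrix (Fin m) (Fin m) ℂ),
        P.IsHermitian ∧ Q.IsHermitian ∧
        Matrix.trace P = 0 ∧ Matrix.trace Q = 0 ∧
        (1 / (m : ℝ)) * (Matrix.trace (P * P)).re = 1 ∧
        (1 / (m : ℝ)) * (Matrix.trace (Q * Q)).re = 1 ∧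
        x = ‖Matrix.trace (tensorOp P Q * depolarizedMES m ε)‖}
      (1 - ε) := by
  have hm0 : (m : ℂ) ≠ 0 := Nat.cast_ne_zero.2 (by omega)
  have normalized (P : Matrix (Fin m) (Fin m) ℂ) :
      (1 / (m : ℝ)) * (P * P).trace.re = 1 ↔ (P * P).trace.re = m := by
    rw [one_div, inv_mul_eq_one₀ (by exact_mod_cast hm0), eq_comm]
  constructor
  · rintro _ ⟨P, Q, hP, hQ, hTP, -, hPP, hQQ, rfl⟩
    exact norm_trace_tensorOp_mul_depolarizedMES_le hε1.le hP hQ hTP ((normalized P).1 hPP)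
      ((normalized Q).1 hQQ)
  · intro b hb
    have : Nontrivial (Fin m) := Fin.nontrivial_iff_two_le.2 hm
    obtain ⟨P, hP, hPt, hTP, hPP⟩ :=
      exists_isHermitian_transpose_eq_self_trace_eq_zero (n := Fin m) m.cast_nonneg
    have hnorm := (normalized P).2 (by simp [hPP])
    refine hb ⟨P, P, hP, hP, hTP, hTP, hnorm, hnorm, ?_⟩
    rw [trace_tensorOp_mul_depolarizedMES ε hTP, hPt, hPP, Complex.ofReal_natCast,
      inv_mul_cancel₀ hm0, mul_one, Complex.norm_real, Real.norm_of_nonneg (by linarith)]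

/-- For `0 ≤ ε < 1` and `m > 1`, the maximal correlation of the depolarized maximally
entangled state is exactly `1 − ε`: the supremum of `|Tr((P ⊗ Q)ψ)|` over Hermitian
traceless `P`, `Q` of normalized 2-norm `1` is `1 − ε`. -/
theorem maximal_correlation_depolarized_mes (m : ℕ) (hm : 1 < m) (ε : ℝ)
    (hε0 : 0 ≤ ε) (hε1 : ε < 1) :
    IsLUB {x : ℝ | ∃ (P Q : Matrix (Fin m) (Fin m) ℂ),
        P.IsHermitian ∧ Q.IsHermitian ∧
        Matrix.trace P = 0 ∧ Matrix.trace Q = 0 ∧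
        (1 / (m : ℝ)) * (Matrix.trace (P * P)).re = 1 ∧
        (1 / (m : ℝ)) * (Matrix.trace (Q * Q)).re = 1 ∧
        x = ‖Matrix.trace (tensorOp P Q * depolarizedMES m ε)‖}
      (1 - ε) :=
  maximal_correlation_depolarized_mes_general m hm ε hε1
end
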